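/- arXiv:1511.06640 — 9 statements merged into one kernel-verified Lean document; each statement's English description precedes it below -/
import Mathlib

section
/- Let (S,T) be a pair of random variables on {0,...,m} × {0,...,n} with binomial moments S_{i,j} = E[C(S,i) C(T,j)]. Then for all u,v ≥ 1, P(S ≥ u, T ≥ v) = ∑_{i=u}^{m} ∑_{j=v}^{n} (-1)^{i+j-(u+v)} C(i-1,u-1) C(j-1,v-1) S_{i,j}. -/
/-!
Pointwise, `∑_{i=u}^{m} (-1)^{i-u} C(i-1,u-1) C(s,i) = [u ≤ s]` for `s ≤ m`: by Pascal's rule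
`C(s+1,i) = C(s,i-1) + C(s,i)` the indicator `[u ≤ s+1]` splits as `[s = u-1] + [u ≤ s]`, and
`[s = a] = ∑_j (-1)^{j-a} C(j,a) C(s,j)` is the alternating binomial sum after
`C(s,j) C(j,a) = C(s,a) C(s-a,j-a)`. Multiplying the identities for `S` and `T` expresses the
indicator of `{u ≤ S, v ≤ T}` as a finite combination of the `C(S,i) C(T,j)`; take expectations.
-/

open MeasureTheory Finset

section BinomialIdentities

variable {R : Type*} [CommRing R]

theorem sum_Icc_mul_choose_of_le (c : ℕ → R) {a s m : ℕ} (hs : s ≤ m) :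
    ∑ i ∈ Icc a m, c i * s.choose i = ∑ i ∈ Icc a s, c i * s.choose i := by
  refine (sum_subset (Icc_subset_Icc_right hs) fun i hi his => ?_).symm
  rw [Nat.choose_eq_zero_of_lt (by simp_all), Nat.cast_zero, mul_zero]

theorem sum_Icc_neg_one_pow_mul_choose_mul_choose (a s : ℕ) :
    ∑ j ∈ Icc a s, ((-1 : R) ^ (j - a) * j.choose a) * s.choose j = if s = a then 1 else 0 := by
  rcases lt_or_ge s a with hsa | has
  · simp [Icc_eq_empty_of_lt hsa, hsa.ne]
  have hrevision : ∀ t ∈ range (s - a + 1),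
      ((-1 : R) ^ (a + t - a) * (a + t).choose a) * s.choose (a + t) =
        s.choose a * ((-1) ^ t * (s - a).choose t) := by
    intro t ht
    have h := Nat.choose_mul (n := s) (k := a + t) (s := a) (by simp at ht; omega)
    rw [Nat.add_sub_cancel_left] at h ⊢
    have h := congrArg (Nat.cast : ℕ → R) h
    push_cast at h
    linear_combination (-1 : R) ^ t * h
  have halternating := congrArg (Int.cast : ℤ → R) (Int.alternating_sum_range_choose (n := s - a))
  push_cast at halternating
  rw [← Ico_add_one_right_eq_Icc, sum_Ico_eq_sum_range, Nat.sub_add_comm has,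
    sum_congr rfl hrevision, ← mul_sum, halternating]
  obtain rfl | hlt := has.eq_or_lt
  · simp
  · simp [hlt.ne', Nat.sub_ne_zero_of_lt hlt]

theorem sum_Icc_neg_one_pow_mul_choose_pred_mul_choose {u : ℕ} (hu : 1 ≤ u) (s : ℕ) :
    ∑ i ∈ Icc u s, ((-1 : R) ^ (i - u) * (i - 1).choose (u - 1)) * s.choose i =
      if u ≤ s then 1 else 0 := by
  obtain ⟨k, rfl⟩ := Nat.exists_eq_add_of_le' hu
  induction s with
  | zero => simp
  | succ s ih =>
    have hpascal : ∀ i ∈ Icc (k + 1) (s + 1),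
        ((-1 : R) ^ (i - (k + 1)) * (i - 1).choose k) * (s + 1).choose i =
          ((-1 : R) ^ (i - (k + 1)) * (i - 1).choose k) * s.choose (i - 1) +
            ((-1 : R) ^ (i - (k + 1)) * (i - 1).choose k) * s.choose i := by
      intro i hi
      obtain ⟨j, rfl⟩ : ∃ j, i = j + 1 := ⟨i - 1, by simp at hi; omega⟩
      rw [Nat.choose_succ_succ', Nat.add_sub_cancel, Nat.cast_add, mul_add]
    have hshift : ∑ i ∈ Icc (k + 1) (s + 1),
        ((-1 : R) ^ (i - (k + 1)) * (i - 1).choose k) * s.choose (i - 1) =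
          ∑ j ∈ Icc k s, ((-1 : R) ^ (j - k) * j.choose k) * s.choose j := by
      rw [← map_add_right_Icc k s 1, sum_map]
      simp
    simp only [Nat.add_sub_cancel] at ih ⊢
    rw [sum_congr rfl hpascal, sum_add_distrib, hshift, sum_Icc_mul_choose_of_le _ s.le_succ, ih,
      sum_Icc_neg_one_pow_mul_choose_mul_choose]
    split_ifs <;> first | omega | norm_num

theorem sum_Icc_neg_one_pow_mul_choose_pred_mul_choose_of_le {u m s : ℕ} (hu : 1 ≤ u)
    (hs : s ≤ m) :
    ∑ i ∈ Icc u m, ((-1 : R) ^ (i - u) * (i - 1).choose (u - 1)) * s.choose i =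
      if u ≤ s then 1 else 0 := by
  rw [sum_Icc_mul_choose_of_le _ hs, sum_Icc_neg_one_pow_mul_choose_pred_mul_choose hu]

theorem sum_Icc_sum_Icc_neg_one_pow_mul_choose_mul_choose {u v m n s t : ℕ} (hu : 1 ≤ u)
    (hv : 1 ≤ v) (hs : s ≤ m) (ht : t ≤ n) :
    ∑ i ∈ Icc u m, ∑ j ∈ Icc v n,
        (-1 : R) ^ ((i - u) + (j - v)) * ((i - 1).choose (u - 1)) * ((j - 1).choose (v - 1)) *
          ((s.choose i : R) * (t.choose j : R)) =
      if u ≤ s ∧ v ≤ t then 1 else 0 := by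
  rw [← mul_one (1 : R), ← ite_zero_mul_ite_zero,
    ← sum_Icc_neg_one_pow_mul_choose_pred_mul_choose_of_le hu hs,
    ← sum_Icc_neg_one_pow_mul_choose_pred_mul_choose_of_le hv ht, sum_mul_sum]
  refine sum_congr rfl fun i _ => sum_congr rfl fun j _ => ?_
  rw [pow_add]
  ring

end BinomialIdentities

theorem MeasureTheory.integrable_comp_of_ae_mem_finset {Ω α : Type*} [MeasurableSpace Ω]
    {μ : Measure Ω} [IsFiniteMeasure μ] [MeasurableSpace α] [Countable α]
    [MeasurableSingletonClass α] {X : Ω → α} (hX : Measurable X) (s : Finset α)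
    (hs : ∀ᵐ ω ∂μ, X ω ∈ s) (f : α → ℝ) : Integrable (fun ω => f (X ω)) μ := by
  refine .of_bound ((measurable_of_countable f).comp hX).aestronglyMeasurable (∑ x ∈ s, ‖f x‖) ?_
  filter_upwards [hs] with ω hω
  exact single_le_sum (f := fun x => ‖f x‖) (fun _ _ => norm_nonneg _) hω

theorem bivariate_tail_from_binomial_moments
    {Ω : Type*} [MeasurableSpace Ω] (μ : Measure Ω) [IsProbabilityMeasure μ]
    (m n : ℕ) (S T : Ω → ℕ) (hS : Measurable S) (hT : Measurable T)
    (hSm : ∀ᵐ ω ∂μ, S ω ≤ m) (hTn : ∀ᵐ ω ∂μ, T ω ≤ n)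
    (u v : ℕ) (hu : 1 ≤ u) (hv : 1 ≤ v) :
    (μ {ω | u ≤ S ω ∧ v ≤ T ω}).toReal =
      ∑ i ∈ Finset.Icc u m, ∑ j ∈ Finset.Icc v n,
        (-1 : ℝ) ^ ((i - u) + (j - v)) * ((i - 1).choose (u - 1)) *
          ((j - 1).choose (v - 1)) *
          ∫ ω, (((S ω).choose i : ℝ) * ((T ω).choose j : ℝ)) ∂μ := by
  have hST : ∀ᵐ ω ∂μ, (S ω, T ω) ∈ range (m + 1) ×ˢ range (n + 1) := by
    filter_upwards [hSm, hTn] with ω hs ht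
    simp [hs, ht]
  have hint (i j : ℕ) : Integrable (fun ω => ((S ω).choose i : ℝ) * ((T ω).choose j : ℝ)) μ :=
    integrable_comp_of_ae_mem_finset (hS.prodMk hT) _ hST fun p => p.1.choose i * p.2.choose j
  have hA : MeasurableSet {ω | u ≤ S ω ∧ v ≤ T ω} :=
    (hS measurableSet_Ici).inter (hT measurableSet_Ici)
  rw [← measureReal_def, ← integral_indicator_one hA]
  calc ∫ ω, {ω | u ≤ S ω ∧ v ≤ T ω}.indicator 1 ω ∂μ
      = ∫ ω, ∑ i ∈ Icc u m, ∑ j ∈ Icc v n, (-1 : ℝ) ^ ((i - u) + (j - v)) *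
          ((i - 1).choose (u - 1)) * ((j - 1).choose (v - 1)) *
            (((S ω).choose i : ℝ) * ((T ω).choose j : ℝ)) ∂μ := by
        refine integral_congr_ae ?_
        filter_upwards [hSm, hTn] with ω hs ht
        rw [sum_Icc_sum_Icc_neg_one_pow_mul_choose_mul_choose hu hv hs ht]
        simp only [Set.indicator_apply, Set.mem_ofPred_eq, Pi.one_apply]
    _ = _ := by
        rw [integral_finsetSum _ fun i _ => integrable_finsetSum _ fun j _ => (hint i j).const_mul _]
        refine sum_congr rfl fun i _ => ?_
        rw [integral_finsetSum _ fun j _ => (hint i j).const_mul _]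
        exact sum_congr rfl fun j _ => integral_const_mul _ _
end

section
/- Let (S,T) be a pair of random variables on {0,...,m} × {0,...,n}, and let 1 ≤ k ≤ m, 1 ≤ l ≤ n. Then P(S ≥ 1, T ≥ 1) ≥ E[(C(m,k) − C(m−S,k))(C(n,l) − C(n−T,l))] / (C(m,k) C(n,l)). (Bivariate Fréchet inequality) -/
/-!
For `s ≤ m`, `C(m,k) - C(m-s,k)` counts the `k`-subsets of an `m`-set that meet a fixed
`s`-subset, so it lies between `0` and `C(m,k)` and vanishes at `s = 0`. Hence the integrand is
at most `C(m,k) C(n,l)` times the indicator of `{S ≥ 1, T ≥ 1}`, and integrating gives the bound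
(when `C(m,k) C(n,l) = 0`, division by zero makes the right-hand side `0`).
-/

open MeasureTheory

/-- Truncated subtraction keeps this in `[0, C(m,k)]` also for `s > m`. -/
noncomputable def hitCount (m k s : ℕ) : ℝ := m.choose k - (m - s).choose k

section hitCount

variable (m k : ℕ)

@[simp]
theorem hitCount_zero : hitCount m k 0 = 0 := by
  simp [hitCount]

theorem hitCount_nonneg (s : ℕ) : 0 ≤ hitCount m k s := by
  have : ((m - s).choose k : ℝ) ≤ m.choose k := by
    exact_mod_cast Nat.choose_le_choose k (Nat.sub_le m s)
  unfold hitCount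
  linarith

theorem hitCount_le_choose (s : ℕ) : hitCount m k s ≤ m.choose k := by
  unfold hitCount
  linarith [((m - s).choose k).cast_nonneg (α := ℝ)]

theorem hitCount_mul_hitCount_le (n l s t : ℕ) :
    hitCount m k s * hitCount n l t ≤ m.choose k * n.choose l :=
  mul_le_mul (hitCount_le_choose m k s) (hitCount_le_choose n l t)
    (hitCount_nonneg n l t) (Nat.cast_nonneg _)

theorem hitCount_mul_hitCount_le_indicator {Ω : Type*} (n l : ℕ) (S T : Ω → ℕ) (ω : Ω) :
    hitCount m k (S ω) * hitCount n l (T ω) ≤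
      {ω | 1 ≤ S ω ∧ 1 ≤ T ω}.indicator (fun _ => (m.choose k : ℝ) * n.choose l) ω := by
  rw [Set.indicator_apply]
  split_ifs with hω
  · exact hitCount_mul_hitCount_le m k n l _ _
  · rw [Set.mem_ofPred_eq] at hω
    obtain hS | hT : S ω = 0 ∨ T ω = 0 := by omega
    · simp [hS]
    · simp [hT]

end hitCount

theorem integral_le_measureReal_mul_of_le_indicator {Ω : Type*} [MeasurableSpace Ω]
    {μ : Measure Ω} [IsFiniteMeasure μ] {f : Ω → ℝ} {A : Set Ω} {C : ℝ}
    (hf : Integrable f μ) (hA : MeasurableSet A) (hle : f ≤ᵐ[μ] A.indicator fun _ => C) :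
    ∫ ω, f ω ∂μ ≤ μ.real A * C := by
  calc ∫ ω, f ω ∂μ ≤ ∫ ω, A.indicator (fun _ => C) ω ∂μ :=
        integral_mono_ae hf ((integrable_const C).indicator hA) hle
    _ = μ.real A * C := integral_indicator_const C hA

theorem bivariate_frechet_inequality_general
    {Ω : Type*} [MeasurableSpace Ω] (μ : Measure Ω) [IsProbabilityMeasure μ]
    (m n : ℕ) (S T : Ω → ℕ) (hS : Measurable S) (hT : Measurable T)
    (k l : ℕ) :
    (μ {ω | 1 ≤ S ω ∧ 1 ≤ T ω}).toReal ≥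
      (∫ ω, ((m.choose k : ℝ) - ((m - S ω).choose k)) *
          ((n.choose l : ℝ) - ((n - T ω).choose l)) ∂μ) /
        ((m.choose k : ℝ) * (n.choose l : ℝ)) := by
  have hA : MeasurableSet {ω | 1 ≤ S ω ∧ 1 ≤ T ω} :=
    (measurableSet_le measurable_const hS).inter (measurableSet_le measurable_const hT)
  have hf : Integrable (fun ω => hitCount m k (S ω) * hitCount n l (T ω)) μ := by
    refine .of_bound (by fun_prop) (m.choose k * n.choose l) (ae_of_all _ fun ω => ?_)
    rw [Real.norm_eq_abs, abs_of_nonneg (mul_nonneg (hitCount_nonneg ..) (hitCount_nonneg ..))]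
    exact hitCount_mul_hitCount_le m k n l _ _
  refine div_le_of_le_mul₀ (by positivity) ENNReal.toReal_nonneg ?_
  exact integral_le_measureReal_mul_of_le_indicator hf hA
    (ae_of_all _ (hitCount_mul_hitCount_le_indicator m k n l S T))

theorem bivariate_frechet_inequality
    {Ω : Type*} [MeasurableSpace Ω] (μ : Measure Ω) [IsProbabilityMeasure μ]
    (m n : ℕ) (S T : Ω → ℕ) (hS : Measurable S) (hT : Measurable T)
    (hSm : ∀ᵐ ω ∂μ, S ω ≤ m) (hTn : ∀ᵐ ω ∂μ, T ω ≤ n)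
    (k l : ℕ) (hk1 : 1 ≤ k) (hkm : k ≤ m) (hl1 : 1 ≤ l) (hln : l ≤ n) :
    (μ {ω | 1 ≤ S ω ∧ 1 ≤ T ω}).toReal ≥
      (∫ ω, ((m.choose k : ℝ) - ((m - S ω).choose k)) *
          ((n.choose l : ℝ) - ((n - T ω).choose l)) ∂μ) /
        ((m.choose k : ℝ) * (n.choose l : ℝ)) :=
  bivariate_frechet_inequality_general μ m n S T hS hT k l
end

section
/- Let (S,T) be a pair of random variables on {0,...,m} × {0,...,n}, and let 1 ≤ k ≤ m, 1 ≤ l ≤ n. Then P(S ≥ 1, T ≥ 1) ≤ E[(C(m,k) − C(m−S,k))(C(n,l) − C(n−T,l))] / (C(m−1,k−1) C(n−1,l−1)). (Bivariate Gumbel inequality) -/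
/-!
On the event `{S ≥ 1, T ≥ 1}` each factor of the integrand dominates the corresponding factor of
the denominator: by Pascal's rule `C(m,k) = C(m-1,k-1) + C(m-1,k)`, and `C(m-S,k) ≤ C(m-1,k)` once
`S ≥ 1`. Both factors are nonnegative everywhere, so Markov's inequality applied to the integrand
at level `C(m-1,k-1) C(n-1,l-1)` gives the bound.
-/

open MeasureTheory

lemma Nat.choose_pred_pred_add_choose_sub_le {m k s : ℕ} (hm : 0 < m) (hk : 0 < k) (hs : 0 < s) :
    (m - 1).choose (k - 1) + (m - s).choose k ≤ m.choose k := by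
  rw [Nat.choose_eq_choose_pred_add hm hk]
  exact Nat.add_le_add_left (Nat.choose_le_choose k (by omega)) _

lemma choose_sub_choose_sub_nonneg (m k s : ℕ) :
    (0 : ℝ) ≤ m.choose k - (m - s).choose k :=
  sub_nonneg.mpr (mod_cast Nat.choose_le_choose k (Nat.sub_le m s))

lemma choose_sub_choose_sub_le (m k s : ℕ) :
    (m.choose k : ℝ) - (m - s).choose k ≤ m.choose k :=
  sub_le_self _ (Nat.cast_nonneg _)

lemma choose_pred_pred_le_choose_sub_choose_sub {m k s : ℕ} (hm : 0 < m) (hk : 0 < k)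
    (hs : 0 < s) : ((m - 1).choose (k - 1) : ℝ) ≤ m.choose k - (m - s).choose k := by
  rw [le_sub_iff_add_le]
  exact_mod_cast Nat.choose_pred_pred_add_choose_sub_le hm hk hs

lemma measureReal_le_integral_div_of_le_on {Ω : Type*} [MeasurableSpace Ω] {μ : Measure Ω}
    [IsFiniteMeasure μ] {f : Ω → ℝ} {A : Set Ω} {c : ℝ} (hc : 0 < c) (hf_nonneg : 0 ≤ᵐ[μ] f)
    (hf_int : Integrable f μ) (hA : ∀ ω ∈ A, c ≤ f ω) :
    μ.real A ≤ (∫ ω, f ω ∂μ) / c := by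
  rw [le_div_iff₀ hc, mul_comm]
  calc c * μ.real A ≤ c * μ.real {ω | c ≤ f ω} :=
        mul_le_mul_of_nonneg_left (measureReal_mono hA) hc.le
    _ ≤ ∫ ω, f ω ∂μ := mul_meas_ge_le_integral_of_nonneg hf_nonneg hf_int c

theorem bivariate_gumbel_inequality_general
    {Ω : Type*} [MeasurableSpace Ω] (μ : Measure Ω) [IsProbabilityMeasure μ]
    (m n : ℕ) (S T : Ω → ℕ) (hS : Measurable S) (hT : Measurable T)
    (k l : ℕ) (hk1 : 1 ≤ k) (hkm : k ≤ m) (hl1 : 1 ≤ l) (hln : l ≤ n) :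
    (μ {ω | 1 ≤ S ω ∧ 1 ≤ T ω}).toReal ≤
      (∫ ω, ((m.choose k : ℝ) - ((m - S ω).choose k)) *
          ((n.choose l : ℝ) - ((n - T ω).choose l)) ∂μ) /
        (((m - 1).choose (k - 1) : ℝ) * ((n - 1).choose (l - 1) : ℝ)) := by
  have hF_nonneg (s t : ℕ) : 0 ≤ ((m.choose k : ℝ) - (m - s).choose k) *
      ((n.choose l : ℝ) - (n - t).choose l) :=
    mul_nonneg (choose_sub_choose_sub_nonneg m k s) (choose_sub_choose_sub_nonneg n l t)
  have hF_int : Integrable (fun ω ↦ ((m.choose k : ℝ) - (m - S ω).choose k) *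
      ((n.choose l : ℝ) - (n - T ω).choose l)) μ := by
    refine .of_bound ((measurable_of_countable (fun p : ℕ × ℕ ↦
      ((m.choose k : ℝ) - (m - p.1).choose k) * ((n.choose l : ℝ) - (n - p.2).choose l))).comp
        (hS.prodMk hT)).aestronglyMeasurable (m.choose k * n.choose l) (ae_of_all _ fun ω ↦ ?_)
    rw [Real.norm_of_nonneg (hF_nonneg _ _)]
    exact mul_le_mul (choose_sub_choose_sub_le m k _) (choose_sub_choose_sub_le n l _)
      (choose_sub_choose_sub_nonneg n l _) (Nat.cast_nonneg _)
  refine measureReal_le_integral_div_of_le_on ?_ (ae_of_all _ fun ω ↦ hF_nonneg _ _) hF_int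
    fun ω ⟨hSω, hTω⟩ ↦ mul_le_mul (choose_pred_pred_le_choose_sub_choose_sub (by omega) hk1 hSω)
      (choose_pred_pred_le_choose_sub_choose_sub (by omega) hl1 hTω) (Nat.cast_nonneg _)
      (choose_sub_choose_sub_nonneg m k _)
  exact mul_pos (mod_cast Nat.choose_pos (by omega)) (mod_cast Nat.choose_pos (by omega))

theorem bivariate_gumbel_inequality
    {Ω : Type*} [MeasurableSpace Ω] (μ : Measure Ω) [IsProbabilityMeasure μ]
    (m n : ℕ) (S T : Ω → ℕ) (hS : Measurable S) (hT : Measurable T)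
    (hSm : ∀ᵐ ω ∂μ, S ω ≤ m) (hTn : ∀ᵐ ω ∂μ, T ω ≤ n)
    (k l : ℕ) (hk1 : 1 ≤ k) (hkm : k ≤ m) (hl1 : 1 ≤ l) (hln : l ≤ n) :
    (μ {ω | 1 ≤ S ω ∧ 1 ≤ T ω}).toReal ≤
      (∫ ω, ((m.choose k : ℝ) - ((m - S ω).choose k)) *
          ((n.choose l : ℝ) - ((n - T ω).choose l)) ∂μ) /
        (((m - 1).choose (k - 1) : ℝ) * ((n - 1).choose (l - 1) : ℝ)) :=
  bivariate_gumbel_inequality_general μ m n S T hS hT k l hk1 hkm hl1 hln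
end

section
/- Let (S,T) be a pair of random variables on {0,...,m} × {0,...,n}, and let 1 ≤ s,k ≤ m and 1 ≤ t,l ≤ n. Then P(S ≥ s, T ≥ t) ≥ 1 − (C(m,k)C(n,l) − E[(C(m,k) − C(m−S,k))(C(n,l) − C(n−T,l))]) / (C(m−s+1,k) C(n−t+1,l)). (Fréchet-type lower bound) -/
/-!
Write `a(x) = C(m,k) - C(m-x,k)` and `b(y) = C(n,l) - C(n-y,l)`, so that `0 ≤ a ≤ C(m,k)` and
`0 ≤ b ≤ C(n,l)`. Off the event `{S ≥ s, T ≥ t}` one factor drops by at least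
`C(m-s+1,k)` resp. `C(n-t+1,l)`, so the integrand `a(S) b(T)` is at most
`C(m,k) C(n,l) - C(m-s+1,k) C(n-t+1,l)` there, and at most `C(m,k) C(n,l)` everywhere.
Integrating this pointwise bound is a Markov-type inequality for the complementary event.
-/

open MeasureTheory

theorem one_sub_div_le_measureReal_of_le_sub_on_compl {Ω : Type*} [MeasurableSpace Ω]
    {μ : Measure Ω} [IsProbabilityMeasure μ] {f : Ω → ℝ} {A : Set Ω} {c d : ℝ}
    (hA : MeasurableSet A) (hf : Integrable f μ) (hd : 0 < d) (hle : ∀ ω, f ω ≤ c)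
    (hle_compl : ∀ ω ∉ A, f ω ≤ c - d) :
    1 - (c - ∫ ω, f ω ∂μ) / d ≤ μ.real A := by
  have hpointwise : ∀ ω, f ω + Aᶜ.indicator (fun _ => d) ω ≤ c := by
    intro ω
    by_cases hω : ω ∈ A
    · simpa [hω] using hle ω
    · simpa [hω, le_sub_iff_add_le] using hle_compl ω hω
  have hind : Integrable (Aᶜ.indicator fun _ => d) μ := (integrable_const d).indicator hA.compl
  have hint : ∫ ω, f ω ∂μ + d * (1 - μ.real A) ≤ c := by
    calc ∫ ω, f ω ∂μ + d * (1 - μ.real A)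
        = ∫ ω, (f ω + Aᶜ.indicator (fun _ => d) ω) ∂μ := by
          rw [integral_add hf hind, integral_indicator_const d hA.compl,
            probReal_compl_eq_one_sub hA, smul_eq_mul, mul_comm]
      _ ≤ ∫ _, c ∂μ := integral_mono (hf.add hind) (integrable_const c) hpointwise
      _ = c := by simp
  rw [sub_le_comm, le_div_iff₀ hd]
  linarith

theorem Nat.cast_choose_sub_choose_sub_nonneg (m k x : ℕ) :
    (0 : ℝ) ≤ m.choose k - (m - x).choose k :=
  sub_nonneg.2 (mod_cast Nat.choose_le_choose k (Nat.sub_le m x))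

theorem Nat.cast_choose_sub_choose_sub_le_of_lt {m k x s : ℕ} (hxs : x < s) (hsm : s ≤ m) :
    (m.choose k : ℝ) - (m - x).choose k ≤ m.choose k - (m - s + 1).choose k :=
  sub_le_sub_left (mod_cast Nat.choose_le_choose k (by omega)) _

theorem Nat.cast_choose_sub_add_one_le {m s : ℕ} (k : ℕ) (hs : 1 ≤ s) (hsm : s ≤ m) :
    ((m - s + 1).choose k : ℝ) ≤ m.choose k :=
  mod_cast Nat.choose_le_choose k (by omega)

theorem mul_le_mul_sub_mul_of_or {x y X Y p q : ℝ} (hx : 0 ≤ x) (hy : 0 ≤ y) (hxX : x ≤ X)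
    (hyY : y ≤ Y) (hp : 0 ≤ p) (hq : 0 ≤ q) (hpX : p ≤ X) (hqY : q ≤ Y)
    (h : x ≤ X - p ∨ y ≤ Y - q) : x * y ≤ X * Y - p * q := by
  rcases h with h | h
  · nlinarith [mul_le_mul h hyY hy (hx.trans h), mul_le_mul_of_nonneg_left hqY hp]
  · nlinarith [mul_le_mul hxX h hy (hx.trans hxX), mul_le_mul_of_nonneg_right hpX hq]

theorem bivariate_frechet_type_lower_bound_general
    {Ω : Type*} [MeasurableSpace Ω] (μ : Measure Ω) [IsProbabilityMeasure μ]
    (m n : ℕ) (S T : Ω → ℕ) (hS : Measurable S) (hT : Measurable T)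
    (s t k l : ℕ) (hs1 : 1 ≤ s) (hsm : s ≤ m)
    (ht1 : 1 ≤ t) (htn : t ≤ n)
    (hpos1 : 0 < (m - s + 1).choose k) (hpos2 : 0 < (n - t + 1).choose l) :
    (μ {ω | s ≤ S ω ∧ t ≤ T ω}).toReal ≥
      1 - ((m.choose k : ℝ) * (n.choose l : ℝ) -
            ∫ ω, ((m.choose k : ℝ) - ((m - S ω).choose k)) *
              ((n.choose l : ℝ) - ((n - T ω).choose l)) ∂μ) /
          (((m - s + 1).choose k : ℝ) * ((n - t + 1).choose l : ℝ)) := by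
  have hA : MeasurableSet {ω | s ≤ S ω ∧ t ≤ T ω} :=
    (hS measurableSet_Ici).inter (hT measurableSet_Ici)
  have ha := Nat.cast_choose_sub_choose_sub_nonneg m k
  have hb := Nat.cast_choose_sub_choose_sub_nonneg n l
  have ha_le x : (m.choose k : ℝ) - (m - x).choose k ≤ m.choose k := sub_le_self _ (by positivity)
  have hb_le y : (n.choose l : ℝ) - (n - y).choose l ≤ n.choose l := sub_le_self _ (by positivity)
  have hle ω : ((m.choose k : ℝ) - (m - S ω).choose k) * ((n.choose l : ℝ) - (n - T ω).choose l)
      ≤ m.choose k * n.choose l :=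
    mul_le_mul (ha_le _) (hb_le _) (hb _) (by positivity)
  have hint : Integrable (fun ω => ((m.choose k : ℝ) - (m - S ω).choose k) *
      ((n.choose l : ℝ) - (n - T ω).choose l)) μ := by
    refine .of_bound (by fun_prop) (m.choose k * n.choose l) (.of_forall fun ω => ?_)
    rw [Real.norm_of_nonneg (mul_nonneg (ha _) (hb _))]
    exact hle ω
  refine one_sub_div_le_measureReal_of_le_sub_on_compl hA hint
    (mul_pos (mod_cast hpos1) (mod_cast hpos2)) hle
    fun ω hω => mul_le_mul_sub_mul_of_or (ha _) (hb _) (ha_le _) (hb_le _) (by positivity)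
      (by positivity) (Nat.cast_choose_sub_add_one_le k hs1 hsm)
      (Nat.cast_choose_sub_add_one_le l ht1 htn) ?_
  simp only [Set.mem_ofPred_eq, not_and_or, not_le] at hω
  exact hω.imp (Nat.cast_choose_sub_choose_sub_le_of_lt · hsm)
    (Nat.cast_choose_sub_choose_sub_le_of_lt · htn)

theorem bivariate_frechet_type_lower_bound
    {Ω : Type*} [MeasurableSpace Ω] (μ : Measure Ω) [IsProbabilityMeasure μ]
    (m n : ℕ) (S T : Ω → ℕ) (hS : Measurable S) (hT : Measurable T)
    (hSm : ∀ᵐ ω ∂μ, S ω ≤ m) (hTn : ∀ᵐ ω ∂μ, T ω ≤ n)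
    (s t k l : ℕ) (hs1 : 1 ≤ s) (hsm : s ≤ m) (hk1 : 1 ≤ k) (hkm : k ≤ m)
    (ht1 : 1 ≤ t) (htn : t ≤ n) (hl1 : 1 ≤ l) (hln : l ≤ n)
    (hpos1 : 0 < (m - s + 1).choose k) (hpos2 : 0 < (n - t + 1).choose l) :
    (μ {ω | s ≤ S ω ∧ t ≤ T ω}).toReal ≥
      1 - ((m.choose k : ℝ) * (n.choose l : ℝ) -
            ∫ ω, ((m.choose k : ℝ) - ((m - S ω).choose k)) *
              ((n.choose l : ℝ) - ((n - T ω).choose l)) ∂μ) /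
          (((m - s + 1).choose k : ℝ) * ((n - t + 1).choose l : ℝ)) :=
  bivariate_frechet_type_lower_bound_general μ m n S T hS hT s t k l hs1 hsm ht1 htn hpos1 hpos2
end

section
/- Let (S,T) be a pair of random variables on {0,...,m} × {0,...,n}. Define F_{k,l} = E[(C(m,k) − C(m−S,k))(C(n,l) − C(n−T,l))] / (C(m,k) C(n,l)) for 1 ≤ k ≤ m, 1 ≤ l ≤ n. Then F_{k,l} is non-decreasing in k, i.e., F_{k,l} ≤ F_{k+1,l} for 1 ≤ k ≤ m−1. (Monotonicity of Fréchet's bound) -/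
open MeasureTheory

lemma choose_cross (a m k : ℕ) (ham : a ≤ m) :
    a.choose (k+1) * m.choose k ≤ a.choose k * m.choose (k+1) := by
  refine Nat.le_of_mul_le_mul_right ?_ (Nat.succ_pos k)
  calc a.choose (k+1) * m.choose k * (k+1)
      = a.choose (k+1) * (k+1) * m.choose k := by ring
    _ = a.choose k * (a - k) * m.choose k := by rw [Nat.choose_succ_right_eq]
    _ ≤ a.choose k * (m - k) * m.choose k := by
        exact Nat.mul_le_mul_right _ (Nat.mul_le_mul_left _ (Nat.sub_le_sub_right ham k))
    _ = a.choose k * (m.choose (k+1) * (k+1)) := by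
        rw [Nat.choose_succ_right_eq]; ring
    _ = a.choose k * m.choose (k+1) * (k+1) := by ring

theorem frechet_bound_monotone
    {Ω : Type*} [MeasurableSpace Ω] (μ : Measure Ω) [IsProbabilityMeasure μ]
    (m n : ℕ) (S T : Ω → ℕ) (hS : Measurable S) (hT : Measurable T)
    (hSm : ∀ᵐ ω ∂μ, S ω ≤ m) (hTn : ∀ᵐ ω ∂μ, T ω ≤ n)
    (F : ℕ → ℕ → ℝ)
    (hF : ∀ k l, F k l =
      (∫ ω, ((m.choose k : ℝ) - ((m - S ω).choose k)) *
          ((n.choose l : ℝ) - ((n - T ω).choose l)) ∂μ) /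
        ((m.choose k : ℝ) * (n.choose l : ℝ)))
    (k l : ℕ) (hk1 : 1 ≤ k) (hkm : k + 1 ≤ m) (hl1 : 1 ≤ l) (hln : l ≤ n) :
    F k l ≤ F (k + 1) l := by
  have hCnl : (0:ℝ) < n.choose l := by exact_mod_cast Nat.choose_pos hln
  have hCmk : (0:ℝ) < m.choose k := by
    exact_mod_cast Nat.choose_pos (le_trans (Nat.le_succ k) hkm)
  have hCmk1 : (0:ℝ) < m.choose (k+1) := by exact_mod_cast Nat.choose_pos hkm
  set g : ℕ → Ω → ℝ := fun j ω =>
    (((m.choose j : ℝ) - ((m - S ω).choose j)) *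
      ((n.choose l : ℝ) - ((n - T ω).choose l))) / ((m.choose j : ℝ) * (n.choose l : ℝ))
    with hg
  have hmeas : ∀ j, Measurable (g j) := by
    intro j
    apply Measurable.div _ measurable_const
    exact ((measurable_const.sub ((measurable_from_top (f := fun x : ℕ =>
      (((m - x).choose j : ℝ)))).comp hS)).mul
      (measurable_const.sub ((measurable_from_top (f := fun x : ℕ =>
      (((n - x).choose l : ℝ)))).comp hT)))
  have hint : ∀ j, j ≤ m → Integrable (g j) μ := by
    intro j hj
    refine Integrable.mono' (integrable_const (1:ℝ)) (hmeas j).aestronglyMeasurable ?_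
    filter_upwards with ω
    have hCmj : (0:ℝ) < m.choose j := by
      exact_mod_cast Nat.choose_pos hj
    have hA0 : ((m - S ω).choose j : ℝ) ≤ m.choose j := by
      exact_mod_cast Nat.choose_le_choose j (Nat.sub_le m (S ω))
    have hB0 : ((n - T ω).choose l : ℝ) ≤ n.choose l := by
      exact_mod_cast Nat.choose_le_choose l (Nat.sub_le n (T ω))
    have h1 : (0:ℝ) ≤ ((m - S ω).choose j : ℝ) := by positivity
    have h2 : (0:ℝ) ≤ ((n - T ω).choose l : ℝ) := by positivity
    have hnum : (0:ℝ) ≤ ((m.choose j : ℝ) - ((m - S ω).choose j)) *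
        ((n.choose l : ℝ) - ((n - T ω).choose l)) :=
      mul_nonneg (by linarith) (by linarith)
    rw [Real.norm_eq_abs, abs_div, abs_of_nonneg hnum,
      abs_of_nonneg (by positivity), div_le_one (by positivity)]
    nlinarith
  have key : ∀ ω, g k ω ≤ g (k+1) ω := by
    intro ω
    have ha : m - S ω ≤ m := Nat.sub_le _ _
    have hcross : ((m - S ω).choose (k+1) : ℝ) * m.choose k ≤
        ((m - S ω).choose k : ℝ) * m.choose (k+1) := by
      exact_mod_cast choose_cross (m - S ω) m k ha
    have hB0 : ((n - T ω).choose l : ℝ) ≤ n.choose l := by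
      exact_mod_cast Nat.choose_le_choose l (Nat.sub_le n (T ω))
    have hfrac : ((m.choose k : ℝ) - ((m - S ω).choose k)) / (m.choose k) ≤
        ((m.choose (k+1) : ℝ) - ((m - S ω).choose (k+1))) / (m.choose (k+1)) := by
      rw [div_le_div_iff₀ hCmk hCmk1]
      nlinarith
    have hBnn : (0:ℝ) ≤ ((n.choose l : ℝ) - ((n - T ω).choose l)) / (n.choose l) := by
      apply div_nonneg _ hCnl.le
      linarith
    have := mul_le_mul_of_nonneg_right hfrac hBnn
    calc g k ω = (((m.choose k : ℝ) - ((m - S ω).choose k)) / (m.choose k)) *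
          (((n.choose l : ℝ) - ((n - T ω).choose l)) / (n.choose l)) := by
          rw [hg]; rw [div_mul_div_comm]
      _ ≤ (((m.choose (k+1) : ℝ) - ((m - S ω).choose (k+1))) / (m.choose (k+1))) *
          (((n.choose l : ℝ) - ((n - T ω).choose l)) / (n.choose l)) := this
      _ = g (k+1) ω := by rw [hg]; rw [div_mul_div_comm]
  have hFk : ∀ j, F j l = ∫ ω, g j ω ∂μ := by
    intro j
    rw [hF j l, hg, ← integral_div]
  rw [hFk k, hFk (k+1)]
  exact integral_mono (hint k (le_trans (Nat.le_succ k) hkm)) (hint (k+1) hkm) key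
end

section
/- Let (S,T) be a pair of random variables on {0,...,m} × {0,...,n}. Define F_{k,l} = E[(C(m,k) − C(m−S,k))(C(n,l) − C(n−T,l))] / (C(m,k) C(n,l)). Then F_{k,l} is concave in k: F_{k,l} − F_{k+1,l} ≤ F_{k+1,l} − F_{k+2,l} for 1 ≤ k ≤ m−2. (Concavity of Fréchet's bound) -/
set_option maxHeartbeats 1000000 in
lemma choose_convex (m r k : ℕ) (hrm : r ≤ m) (hkm : k + 2 ≤ m) :
    2 * ((r.choose (k+1) : ℝ) / (m.choose (k+1))) ≤
      (r.choose k : ℝ) / (m.choose k) + (r.choose (k+2) : ℝ) / (m.choose (k+2)) := by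
  have hB : 0 < (m.choose k : ℝ) := by
    exact_mod_cast Nat.choose_pos (by omega)
  have hB' : 0 < (m.choose (k+1) : ℝ) := by
    exact_mod_cast Nat.choose_pos (by omega)
  have hB'' : 0 < (m.choose (k+2) : ℝ) := by
    exact_mod_cast Nat.choose_pos (by omega)
  rcases le_or_gt r k with hrk | hrk
  · have h1 : r.choose (k+1) = 0 := Nat.choose_eq_zero_of_lt (by omega)
    rw [h1]
    simp only [Nat.cast_zero, zero_div, mul_zero]
    positivity
  · -- k < r, so k+1 ≤ r
    have hA : 0 < (r.choose k : ℝ) := by exact_mod_cast Nat.choose_pos (by omega)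
    have hA' : 0 < (r.choose (k+1) : ℝ) := by exact_mod_cast Nat.choose_pos hrk
    have hA'' : (0:ℝ) ≤ r.choose (k+2) := by positivity
    -- identities: C r (k+1) * C m k * (m-k) = C r k * C m (k+1) * (r-k)
    have e1 : (r.choose (k+1) : ℝ) * (m.choose k) * ((m:ℝ) - k) =
        (r.choose k : ℝ) * (m.choose (k+1)) * ((r:ℝ) - k) := by
      have n1 := Nat.choose_succ_right_eq r k
      have n2 := Nat.choose_succ_right_eq m k
      have : (r.choose (k+1) * (k+1)) * (m.choose k * (m - k)) =
          (m.choose (k+1) * (k+1)) * (r.choose k * (r - k)) := by rw [n1, n2]; ring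
      have hc := congrArg (Nat.cast : ℕ → ℝ) this
      push_cast [Nat.cast_sub (by omega : k ≤ m), Nat.cast_sub (by omega : k ≤ r)] at hc
      nlinarith [hc]
    have e2 : (r.choose (k+2) : ℝ) * (m.choose (k+1)) * ((m:ℝ) - k - 1) =
        (r.choose (k+1) : ℝ) * (m.choose (k+2)) * ((r:ℝ) - k - 1) := by
      have n1 := Nat.choose_succ_right_eq r (k+1)
      have n2 := Nat.choose_succ_right_eq m (k+1)
      have : (r.choose (k+2) * (k+2)) * (m.choose (k+1) * (m - (k+1))) =
          (m.choose (k+2) * (k+2)) * (r.choose (k+1) * (r - (k+1))) := by rw [n1, n2]; ring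
      have hc := congrArg (Nat.cast : ℕ → ℝ) this
      push_cast [Nat.cast_sub (by omega : k+1 ≤ m), Nat.cast_sub (by omega : k+1 ≤ r)] at hc
      nlinarith [hc]
    have hmk : (2:ℝ) ≤ (m:ℝ) - k := by
      have : (k:ℝ) + 2 ≤ m := by exact_mod_cast hkm
      linarith
    have hrk1 : (1:ℝ) ≤ (r:ℝ) - k := by
      have : (k:ℝ) + 1 ≤ r := by exact_mod_cast hrk
      linarith
    have hmr : (r:ℝ) ≤ m := by exact_mod_cast hrm
    have hsq : ((m:ℝ) - r) ≤ ((m:ℝ) - r)^2 := by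
      have : ((m - r : ℕ):ℝ) ≤ ((m - r : ℕ):ℝ)^2 := by
        have := Nat.le_self_pow (two_ne_zero) (m - r)
        exact_mod_cast this
      rwa [Nat.cast_sub hrm] at this
    set A := (r.choose k : ℝ); set A' := (r.choose (k+1) : ℝ); set A'' := (r.choose (k+2) : ℝ)
    set B := (m.choose k : ℝ); set B' := (m.choose (k+1) : ℝ); set B'' := (m.choose (k+2) : ℝ)
    set mk := (m:ℝ) - k with hmkdef
    set rk := (r:ℝ) - k with hrkdef
    have e1' : A' * B * mk = A * B' * rk := e1
    have e2' : A'' * B' * (mk - 1) = A' * B'' * (rk - 1) := by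
      have : (m:ℝ) - k - 1 = mk - 1 := by rw [hmkdef]
      linarith [e2]
    have hc : 0 < rk * (mk - 1) := by nlinarith
    have h3 : (A * B'' + B * A'') * B' * (rk * (mk - 1)) =
        A' * B * B'' * (mk * (mk - 1) + (rk - 1) * rk) := by
      linear_combination (-(B'' * (mk - 1))) * e1' + (B * rk) * e2'
    have key2 : 2 * (rk * (mk - 1)) ≤ mk * (mk - 1) + (rk - 1) * rk := by
      have hd : mk - rk = (m:ℝ) - r := by rw [hmkdef, hrkdef]; ring
      nlinarith [hsq]
    have h4 : 2 * A' * (B * B'') * (rk * (mk - 1)) ≤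
        (A * B'' + B * A'') * B' * (rk * (mk - 1)) := by
      rw [h3]
      nlinarith [mul_le_mul_of_nonneg_left key2
        (by positivity : (0:ℝ) ≤ A' * B * B'')]
    rw [mul_div_assoc', div_add_div _ _ (ne_of_gt hB) (ne_of_gt hB''),
      div_le_div_iff₀ (by positivity) (by positivity)]
    exact le_of_mul_le_mul_right h4 hc

open MeasureTheory

theorem frechet_bound_concave
    {Ω : Type*} [MeasurableSpace Ω] (μ : Measure Ω) [IsProbabilityMeasure μ]
    (m n : ℕ) (S T : Ω → ℕ) (hS : Measurable S) (hT : Measurable T)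
    (hSm : ∀ᵐ ω ∂μ, S ω ≤ m) (hTn : ∀ᵐ ω ∂μ, T ω ≤ n)
    (F : ℕ → ℕ → ℝ)
    (hF : ∀ k l, F k l =
      (∫ ω, ((m.choose k : ℝ) - ((m - S ω).choose k)) *
          ((n.choose l : ℝ) - ((n - T ω).choose l)) ∂μ) /
        ((m.choose k : ℝ) * (n.choose l : ℝ)))
    (k l : ℕ) (hk1 : 1 ≤ k) (hkm : k + 2 ≤ m) (hl1 : 1 ≤ l) (hln : l ≤ n) :
    F k l - F (k + 1) l ≤ F (k + 1) l - F (k + 2) l := by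
  set f : ℕ → Ω → ℝ := fun j ω =>
    ((m.choose j : ℝ) - ((m - S ω).choose j)) * ((n.choose l : ℝ) - ((n - T ω).choose l))
    with hfdef
  have hd : (0:ℝ) < n.choose l := by exact_mod_cast Nat.choose_pos hln
  have hc : ∀ j, j ≤ m → (0:ℝ) < m.choose j := fun j hj => by
    exact_mod_cast Nat.choose_pos hj
  have hc0 := hc k (by omega)
  have hc1 := hc (k+1) (by omega)
  have hc2 := hc (k+2) (by omega)
  -- integrability
  have hint : ∀ j, Integrable (f j) μ := by
    intro j
    have hmeas : Measurable (f j) := by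
      have g1 : Measurable fun s : ℕ => ((m.choose j : ℝ) - ((m - s).choose j)) :=
        measurable_from_top
      have g2 : Measurable fun t : ℕ => ((n.choose l : ℝ) - ((n - t).choose l)) :=
        measurable_from_top
      exact (g1.comp hS).mul (g2.comp hT)
    refine (integrable_const ((m.choose j : ℝ) * (n.choose l))).mono'
      hmeas.aestronglyMeasurable ?_
    filter_upwards with ω
    have h1 : (0:ℝ) ≤ (m.choose j : ℝ) - ((m - S ω).choose j) := by
      have : (m - S ω).choose j ≤ m.choose j := Nat.choose_le_choose j (Nat.sub_le m (S ω))
      have := (Nat.cast_le (α := ℝ)).mpr this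
      linarith
    have h2 : (0:ℝ) ≤ (n.choose l : ℝ) - ((n - T ω).choose l) := by
      have : (n - T ω).choose l ≤ n.choose l := Nat.choose_le_choose l (Nat.sub_le n (T ω))
      have := (Nat.cast_le (α := ℝ)).mpr this
      linarith
    rw [Real.norm_eq_abs, hfdef, abs_mul, abs_of_nonneg h1, abs_of_nonneg h2]
    have h3 : (m.choose j : ℝ) - ((m - S ω).choose j) ≤ (m.choose j : ℝ) :=
      sub_le_self _ (by positivity)
    have h4 : (n.choose l : ℝ) - ((n - T ω).choose l) ≤ (n.choose l : ℝ) :=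
      sub_le_self _ (by positivity)
    exact mul_le_mul h3 h4 h2 (by positivity)
  -- pointwise nonnegativity of the convexity combination
  have h0 : 0 ≤ ∫ ω, (2 * (f (k+1) ω / ((m.choose (k+1) : ℝ) * (n.choose l)))
      - f k ω / ((m.choose k : ℝ) * (n.choose l))
      - f (k+2) ω / ((m.choose (k+2) : ℝ) * (n.choose l))) ∂μ := by
    refine integral_nonneg fun ω => ?_
    have hb : (0:ℝ) ≤ (n.choose l : ℝ) - ((n - T ω).choose l) := by
      have : (n - T ω).choose l ≤ n.choose l := Nat.choose_le_choose l (Nat.sub_le n (T ω))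
      have := (Nat.cast_le (α := ℝ)).mpr this
      linarith
    have hconv := choose_convex m (m - S ω) k (Nat.sub_le m (S ω)) hkm
    have hiden : 2 * (f (k+1) ω / ((m.choose (k+1) : ℝ) * (n.choose l)))
        - f k ω / ((m.choose k : ℝ) * (n.choose l))
        - f (k+2) ω / ((m.choose (k+2) : ℝ) * (n.choose l))
        = (((((m - S ω).choose k : ℝ) / (m.choose k))
            + (((m - S ω).choose (k+2) : ℝ) / (m.choose (k+2))))
          - 2 * (((m - S ω).choose (k+1) : ℝ) / (m.choose (k+1))))
          * (((n.choose l : ℝ) - ((n - T ω).choose l)) / (n.choose l)) := by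
      rw [hfdef]
      field_simp
      ring
    rw [hiden]
    exact mul_nonneg (by linarith) (div_nonneg hb hd.le)
  -- linearity of the integral
  have heq : ∫ ω, (2 * (f (k+1) ω / ((m.choose (k+1) : ℝ) * (n.choose l)))
      - f k ω / ((m.choose k : ℝ) * (n.choose l))
      - f (k+2) ω / ((m.choose (k+2) : ℝ) * (n.choose l))) ∂μ
      = 2 * ((∫ ω, f (k+1) ω ∂μ) / ((m.choose (k+1) : ℝ) * (n.choose l)))
        - (∫ ω, f k ω ∂μ) / ((m.choose k : ℝ) * (n.choose l))
        - (∫ ω, f (k+2) ω ∂μ) / ((m.choose (k+2) : ℝ) * (n.choose l)) := by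
    have i1 : Integrable (fun ω => 2 * (f (k+1) ω / ((m.choose (k+1) : ℝ) * (n.choose l)))) μ :=
      ((hint (k+1)).div_const _).const_mul 2
    have i0 : Integrable (fun ω => f k ω / ((m.choose k : ℝ) * (n.choose l))) μ :=
      (hint k).div_const _
    have i2 : Integrable (fun ω => f (k+2) ω / ((m.choose (k+2) : ℝ) * (n.choose l))) μ :=
      (hint (k+2)).div_const _
    have i10 : Integrable (fun ω => 2 * (f (k+1) ω / ((m.choose (k+1) : ℝ) * (n.choose l)))
        - f k ω / ((m.choose k : ℝ) * (n.choose l))) μ := i1.sub i0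
    rw [integral_sub i10 i2, integral_sub i1 i0, integral_const_mul, integral_div,
      integral_div, integral_div]
  rw [heq] at h0
  rw [hF k l, hF (k+1) l, hF (k+2) l]
  linarith [h0]
end

section
/- Let (S,T) be a pair of random variables on {0,...,m} × {0,...,n}. Define G_{k,l} = E[(C(m,k) − C(S,k))(C(n,l) − C(T,l))] / (C(m−1,k−1) C(n−1,l−1)) for 1 ≤ k ≤ m, 1 ≤ l ≤ n. Then G_{k,l} equals ∑_{i=k}^{m} ∑_{j=l}^{n} C(i−1,k−1) C(j−1,l−1) P(S < i, T < j) / (C(m−1,k−1) C(n−1,l−1)), and G_{k,l} is non-increasing in k: G_{k,l} ≥ G_{k+1,l} for 1 ≤ k ≤ m−1. (Monotonicity of Gumbel's bound) -/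
/-!
By the hockey-stick identity, `C(m,k) - C(s,k) = ∑_{i=k}^m C(i-1,k-1) [s < i]` for `s ≤ m`, so the
product inside the expectation expands into indicators of the events `{S < i, T < j}`; this is the
representation. Monotonicity in `k` then holds term by term, because
`C(a,k+1) / C(a,k) = (a-k)/(k+1)` increases with `a`, and the extra terms of the `k`-sum are
nonnegative.
-/

open MeasureTheory Finset

theorem Nat.choose_sub_choose_eq_sum {R : Type*} [Ring R] {k : ℕ} (hk : 1 ≤ k) {s m : ℕ}
    (hs : s ≤ m) :
    (m.choose k : R) - s.choose k =
      ∑ i ∈ Icc k m, if s < i then ((i - 1).choose (k - 1) : R) else 0 := by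
  induction m, hs using Nat.le_induction with
  | base =>
    refine (sub_self _).trans (sum_eq_zero fun i hi => if_neg ?_).symm
    simp only [mem_Icc] at hi
    omega
  | succ m hsm ih =>
    obtain ⟨k, rfl⟩ := Nat.exists_eq_add_of_le' hk
    rcases Nat.lt_or_ge m k with hmk | hkm
    · rw [Icc_eq_empty (by omega), Nat.choose_eq_zero_of_lt (by omega),
        Nat.choose_eq_zero_of_lt (by omega : s < k + 1)]
      simp
    · rw [sum_Icc_succ_top (by omega), ← ih, if_pos (by omega), Nat.choose_succ_succ']
      simp only [Nat.add_sub_cancel]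
      push_cast
      abel

theorem Nat.choose_succ_mul_choose_le_choose_mul_choose_succ {a b : ℕ} (hab : a ≤ b) (k : ℕ) :
    a.choose (k + 1) * b.choose k ≤ a.choose k * b.choose (k + 1) := by
  refine Nat.le_of_mul_le_mul_right ?_ k.succ_pos
  calc a.choose (k + 1) * b.choose k * (k + 1)
      = a.choose k * (a - k) * b.choose k := by rw [← Nat.choose_succ_right_eq]; ring
    _ ≤ a.choose k * (b - k) * b.choose k := by gcongr
    _ = a.choose k * b.choose (k + 1) * (k + 1) := by
      rw [mul_assoc _ (b.choose _), Nat.choose_succ_right_eq]; ring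

theorem sum_choose_mul_div_choose_succ_le {m k : ℕ} (hkm : k + 2 ≤ m) (a : ℕ → ℝ)
    (ha : ∀ i, 0 ≤ a i) :
    (∑ i ∈ Icc (k + 2) m, ((i - 1).choose (k + 1) : ℝ) * a i) / ((m - 1).choose (k + 1) : ℝ) ≤
      (∑ i ∈ Icc (k + 1) m, ((i - 1).choose k : ℝ) * a i) / ((m - 1).choose k : ℝ) := by
  have hpos : ∀ j ≤ k + 1, (0 : ℝ) < (m - 1).choose j := fun j hj =>
    Nat.cast_pos.2 (Nat.choose_pos (by omega))
  rw [div_le_div_iff₀ (hpos _ le_rfl) (hpos _ k.le_succ), sum_mul, sum_mul]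
  calc ∑ i ∈ Icc (k + 2) m, ((i - 1).choose (k + 1) : ℝ) * a i * (m - 1).choose k
      ≤ ∑ i ∈ Icc (k + 2) m, ((i - 1).choose k : ℝ) * a i * (m - 1).choose (k + 1) := by
        refine sum_le_sum fun i hi => ?_
        have hchoose : ((i - 1).choose (k + 1) : ℝ) * (m - 1).choose k ≤
            (i - 1).choose k * (m - 1).choose (k + 1) := by
          exact_mod_cast Nat.choose_succ_mul_choose_le_choose_mul_choose_succ
            (Nat.sub_le_sub_right (mem_Icc.1 hi).2 1) k
        linarith [mul_le_mul_of_nonneg_right hchoose (ha i)]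
    _ ≤ ∑ i ∈ Icc (k + 1) m, ((i - 1).choose k : ℝ) * a i * (m - 1).choose (k + 1) :=
        sum_le_sum_of_subset_of_nonneg (Icc_subset_Icc_left (k + 1).le_succ) fun i _ _ => by
          have := ha i
          positivity

theorem integral_choose_sub_mul_choose_sub {Ω : Type*} [MeasurableSpace Ω] (μ : Measure Ω)
    [IsFiniteMeasure μ] {S T : Ω → ℕ} (hS : Measurable S) (hT : Measurable T) {m n k l : ℕ}
    (hk : 1 ≤ k) (hl : 1 ≤ l) (hSm : ∀ᵐ ω ∂μ, S ω ≤ m) (hTn : ∀ᵐ ω ∂μ, T ω ≤ n) :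
    ∫ ω, ((m.choose k : ℝ) - (S ω).choose k) * ((n.choose l : ℝ) - (T ω).choose l) ∂μ =
      ∑ i ∈ Icc k m, ∑ j ∈ Icc l n, ((i - 1).choose (k - 1) : ℝ) * ((j - 1).choose (l - 1) : ℝ) *
        μ.real {ω | S ω < i ∧ T ω < j} := by
  have hae : (fun ω => ((m.choose k : ℝ) - (S ω).choose k) * ((n.choose l : ℝ) - (T ω).choose l))
      =ᵐ[μ] fun ω => ∑ i ∈ Icc k m, ∑ j ∈ Icc l n, {ω | S ω < i ∧ T ω < j}.indicator
        (fun _ => ((i - 1).choose (k - 1) : ℝ) * ((j - 1).choose (l - 1) : ℝ)) ω := by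
    filter_upwards [hSm, hTn] with ω hSω hTω
    simp only [Nat.choose_sub_choose_eq_sum hk hSω, Nat.choose_sub_choose_eq_sum hl hTω,
      sum_mul_sum, ite_zero_mul_ite_zero, Set.indicator_apply, Set.mem_ofPred_eq]
  have hmeas : ∀ i j, MeasurableSet {ω | S ω < i ∧ T ω < j} := fun i j =>
    (hS measurableSet_Iio).inter (hT measurableSet_Iio)
  rw [integral_congr_ae hae, integral_finsetSum _ fun i _ => integrable_finsetSum _ fun j _ =>
    (integrable_const _).indicator (hmeas i j)]
  refine sum_congr rfl fun i _ => ?_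
  rw [integral_finsetSum _ fun j _ => (integrable_const _).indicator (hmeas i j)]
  refine sum_congr rfl fun j _ => ?_
  rw [integral_indicator_const _ (hmeas i j), smul_eq_mul, mul_comm]

theorem gumbel_bound_repr_and_monotone_general
    {Ω : Type*} [MeasurableSpace Ω] (μ : Measure Ω) [IsProbabilityMeasure μ]
    (m n : ℕ) (S T : Ω → ℕ) (hS : Measurable S) (hT : Measurable T)
    (hSm : ∀ᵐ ω ∂μ, S ω ≤ m) (hTn : ∀ᵐ ω ∂μ, T ω ≤ n)
    (G : ℕ → ℕ → ℝ)
    (hG : ∀ k l, G k l =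
      (∫ ω, ((m.choose k : ℝ) - ((S ω).choose k)) *
          ((n.choose l : ℝ) - ((T ω).choose l)) ∂μ) /
        (((m - 1).choose (k - 1) : ℝ) * ((n - 1).choose (l - 1) : ℝ)))
    (l : ℕ) (hl1 : 1 ≤ l) :
    (∀ k, 1 ≤ k → k ≤ m →
        G k l =
          (∑ i ∈ Finset.Icc k m, ∑ j ∈ Finset.Icc l n,
              ((i - 1).choose (k - 1) : ℝ) * ((j - 1).choose (l - 1) : ℝ) *
                (μ {ω | S ω < i ∧ T ω < j}).toReal) /
            (((m - 1).choose (k - 1) : ℝ) * ((n - 1).choose (l - 1) : ℝ))) ∧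
      (∀ k, 1 ≤ k → k + 1 ≤ m → G (k + 1) l ≤ G k l) := by
  have repr : ∀ k, 1 ≤ k → G k l =
      (∑ i ∈ Icc k m, ∑ j ∈ Icc l n, ((i - 1).choose (k - 1) : ℝ) *
        ((j - 1).choose (l - 1) : ℝ) * μ.real {ω | S ω < i ∧ T ω < j}) /
          (((m - 1).choose (k - 1) : ℝ) * ((n - 1).choose (l - 1) : ℝ)) := fun k hk => by
    rw [hG, integral_choose_sub_mul_choose_sub μ hS hT hk hl1 hSm hTn]
  refine ⟨fun k hk _ => repr k hk, fun k hk hkm => ?_⟩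
  obtain ⟨k, rfl⟩ := Nat.exists_eq_add_of_le' hk
  set a : ℕ → ℝ := fun i => ∑ j ∈ Icc l n,
    ((j - 1).choose (l - 1) : ℝ) * μ.real {ω | S ω < i ∧ T ω < j}
  have hsum : ∀ k, ∑ i ∈ Icc k m, ∑ j ∈ Icc l n, ((i - 1).choose (k - 1) : ℝ) *
      ((j - 1).choose (l - 1) : ℝ) * μ.real {ω | S ω < i ∧ T ω < j} =
        ∑ i ∈ Icc k m, ((i - 1).choose (k - 1) : ℝ) * a i := fun k => by
    simp only [a, mul_sum, mul_assoc]
  rw [repr _ hk, repr _ (by omega), hsum, hsum, ← div_div, ← div_div]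
  simp only [Nat.add_sub_cancel]
  exact div_le_div_of_nonneg_right
    (sum_choose_mul_div_choose_succ_le hkm a fun i => sum_nonneg fun j _ => by positivity)
    (Nat.cast_nonneg _)

theorem gumbel_bound_repr_and_monotone
    {Ω : Type*} [MeasurableSpace Ω] (μ : Measure Ω) [IsProbabilityMeasure μ]
    (m n : ℕ) (S T : Ω → ℕ) (hS : Measurable S) (hT : Measurable T)
    (hSm : ∀ᵐ ω ∂μ, S ω ≤ m) (hTn : ∀ᵐ ω ∂μ, T ω ≤ n)
    (G : ℕ → ℕ → ℝ)
    (hG : ∀ k l, G k l =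
      (∫ ω, ((m.choose k : ℝ) - ((S ω).choose k)) *
          ((n.choose l : ℝ) - ((T ω).choose l)) ∂μ) /
        (((m - 1).choose (k - 1) : ℝ) * ((n - 1).choose (l - 1) : ℝ)))
    (l : ℕ) (hl1 : 1 ≤ l) (hln : l ≤ n) :
    (∀ k, 1 ≤ k → k ≤ m →
        G k l =
          (∑ i ∈ Finset.Icc k m, ∑ j ∈ Finset.Icc l n,
              ((i - 1).choose (k - 1) : ℝ) * ((j - 1).choose (l - 1) : ℝ) *
                (μ {ω | S ω < i ∧ T ω < j}).toReal) /
            (((m - 1).choose (k - 1) : ℝ) * ((n - 1).choose (l - 1) : ℝ))) ∧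
      (∀ k, 1 ≤ k → k + 1 ≤ m → G (k + 1) l ≤ G k l) :=
  gumbel_bound_repr_and_monotone_general μ m n S T hS hT hSm hTn G hG l hl1
end

section
/- Let (S,T) be a pair of random variables on {0,...,m} × {0,...,n}. Define G_{k,l} = E[(C(m,k) − C(S,k))(C(n,l) − C(T,l))] / (C(m−1,k−1) C(n−1,l−1)). Then G_{k,l} is convex in k: G_{k,l} − G_{k+1,l} ≤ G_{k−1,l} − G_{k,l} for 2 ≤ k ≤ m−1. (Convexity of Gumbel's bound) -/
open MeasureTheory


lemma key_real (A j i : ℕ) (hj : j ≤ A) (hiA : i + 2 ≤ A) :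
    2 * ((j.choose (i+1) : ℝ) / (A.choose (i+1))) ≤
      (j.choose i : ℝ) / (A.choose i) + (j.choose (i+2) : ℝ) / (A.choose (i+2)) := by
  have ha0 : 0 < (A.choose i : ℝ) := by
    exact_mod_cast Nat.choose_pos (by omega)
  have ha1 : 0 < (A.choose (i+1) : ℝ) := by
    exact_mod_cast Nat.choose_pos (by omega)
  have ha2 : 0 < (A.choose (i+2) : ℝ) := by
    exact_mod_cast Nat.choose_pos (by omega)
  by_cases hji : j ≤ i
  · have hb1 : j.choose (i+1) = 0 := Nat.choose_eq_zero_of_lt (by omega)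
    have hb2 : j.choose (i+2) = 0 := Nat.choose_eq_zero_of_lt (by omega)
    rw [hb1, hb2]
    simp
    positivity
  · push_neg at hji
    have hij : i + 1 ≤ j := hji
    have e1 : (j.choose (i+1) : ℝ) * (i+1) = (j.choose i) * ((j:ℝ) - i) := by
      have h := Nat.choose_succ_right_eq j i
      have hc : ((j - i : ℕ) : ℝ) = (j:ℝ) - i := by
        rw [Nat.cast_sub (by omega)]
      rw [← hc]
      exact_mod_cast h
    have e2 : (j.choose (i+2) : ℝ) * (i+2) = (j.choose (i+1)) * ((j:ℝ) - (i+1)) := by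
      have h := Nat.choose_succ_right_eq j (i+1)
      have hc : ((j - (i+1) : ℕ) : ℝ) = (j:ℝ) - ((i:ℝ)+1) := by
        rw [Nat.cast_sub (by omega)]; push_cast; ring
      rw [← hc]
      exact_mod_cast h
    have e3 : (A.choose (i+1) : ℝ) * (i+1) = (A.choose i) * ((A:ℝ) - i) := by
      have h := Nat.choose_succ_right_eq A i
      have hc : ((A - i : ℕ) : ℝ) = (A:ℝ) - i := by
        rw [Nat.cast_sub (by omega)]
      rw [← hc]; exact_mod_cast h
    have e4 : (A.choose (i+2) : ℝ) * (i+2) = (A.choose (i+1)) * ((A:ℝ) - (i+1)) := by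
      have h := Nat.choose_succ_right_eq A (i+1)
      have hc : ((A - (i+1) : ℕ) : ℝ) = (A:ℝ) - ((i:ℝ)+1) := by
        rw [Nat.cast_sub (by omega)]; push_cast; ring
      rw [← hc]; exact_mod_cast h
    have hb0 : 0 < (j.choose i : ℝ) := by exact_mod_cast Nat.choose_pos (by omega)
    have hAj : (0:ℝ) ≤ ((A:ℝ) - j) * ((A:ℝ) - j - 1) := by
      rcases eq_or_lt_of_le hj with h | h
      · simp [h]
      · have h1 : (1:ℝ) ≤ (A:ℝ) - j := by
          have h2 : (j:ℝ) + 1 ≤ (A:ℝ) := by exact_mod_cast h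
          linarith
        nlinarith
    have hx1 : (2:ℝ) ≤ (A:ℝ) - i := by
      have h2 : (i:ℝ) + 2 ≤ (A:ℝ) := by exact_mod_cast hiA
      linarith
    have hi1 : (0:ℝ) < (i:ℝ)+1 := by positivity
    have hi2 : (0:ℝ) < (i:ℝ)+2 := by positivity
    have hb1' : (j.choose (i+1) : ℝ) = (j.choose i) * ((j:ℝ) - i) / ((i:ℝ)+1) := by
      rw [eq_div_iff hi1.ne']; linear_combination e1
    have hb2' : (j.choose (i+2) : ℝ) = (j.choose i) * ((j:ℝ) - i) * ((j:ℝ) - i - 1) / (((i:ℝ)+1)*((i:ℝ)+2)) := by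
      rw [eq_div_iff (by positivity)]
      linear_combination ((i:ℝ)+1) * e2 + ((j:ℝ)-(i:ℝ)-1) * e1
    have ha1' : (A.choose (i+1) : ℝ) = (A.choose i) * ((A:ℝ) - i) / ((i:ℝ)+1) := by
      rw [eq_div_iff hi1.ne']; linear_combination e3
    have ha2' : (A.choose (i+2) : ℝ) = (A.choose i) * ((A:ℝ) - i) * ((A:ℝ) - i - 1) / (((i:ℝ)+1)*((i:ℝ)+2)) := by
      rw [eq_div_iff (by positivity)]
      linear_combination ((i:ℝ)+1) * e4 + ((A:ℝ)-(i:ℝ)-1) * e3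
    set b0 : ℝ := (j.choose i : ℝ)
    set a0 : ℝ := (A.choose i : ℝ)
    set x : ℝ := (A:ℝ) - i with hxdef
    set y : ℝ := (j:ℝ) - i with hydef
    have hy1 : (1:ℝ) ≤ y := by
      have h2 : (i:ℝ) + 1 ≤ (j:ℝ) := by exact_mod_cast hij
      simp only [hydef]; linarith
    have hx0 : (0:ℝ) < x := by linarith
    have hx1' : (0:ℝ) < x - 1 := by linarith
    have hb2c : (j.choose (i+2) : ℝ) * (((i:ℝ)+1)*((i:ℝ)+2)) = b0 * y * (y - 1) := by
      linear_combination ((i:ℝ)+1) * e2 + (y-1) * e1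
    have ha2c : (A.choose (i+2) : ℝ) * (((i:ℝ)+1)*((i:ℝ)+2)) = a0 * x * (x - 1) := by
      linear_combination ((i:ℝ)+1) * e4 + (x-1) * e3
    have q1 : (j.choose (i+1) : ℝ) / (A.choose (i+1)) = b0 * y / (a0 * x) := by
      rw [div_eq_div_iff ha1.ne' (by positivity)]
      linear_combination (A.choose (i+1) : ℝ) * e1 - (j.choose (i+1) : ℝ) * e3
    have q2 : (j.choose (i+2) : ℝ) / (A.choose (i+2)) = b0 * (y*(y-1)) / (a0 * (x*(x-1))) := by
      rw [div_eq_div_iff ha2.ne' (by positivity)]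
      have hsc : ((j.choose (i+2) : ℝ) * (a0 * (x*(x-1)))) * (((i:ℝ)+1)*((i:ℝ)+2))
          = (b0 * (y*(y-1)) * (A.choose (i+2) : ℝ)) * (((i:ℝ)+1)*((i:ℝ)+2)) := by
        linear_combination (a0*x*(x-1)) * hb2c - (b0*y*(y-1)) * ha2c
      exact mul_right_cancel₀ (by positivity) hsc
    rw [q1, q2]
    have hxy : 0 ≤ x - y := by
      have h2 : (j:ℝ) ≤ (A:ℝ) := by exact_mod_cast hj
      simp only [hxdef, hydef]; linarith
    have hAj' : (0:ℝ) ≤ (x - y) * (x - y - 1) := by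
      simp only [hxdef, hydef]
      have : (↑A:ℝ) - ↑i - ((↑j:ℝ) - ↑i) = (↑A:ℝ) - ↑j := by ring
      rw [this]
      exact hAj
    have hid : b0 / a0 + b0 * (y*(y-1)) / (a0 * (x*(x-1))) - 2 * (b0 * y / (a0 * x))
        = (b0 / a0) * (((x-y)*(x-y-1)) / (x*(x-1))) := by
      field_simp
      ring
    have hnn : 0 ≤ (b0 / a0) * (((x-y)*(x-y-1)) / (x*(x-1))) := by
      apply mul_nonneg (by positivity)
      exact div_nonneg hAj' (by positivity)
    linarith


lemma choose_sub_eq_sum (m s i : ℕ) (hs : s ≤ m) :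
    s.choose (i+1) + ∑ j ∈ Finset.Ico s m, j.choose i = m.choose (i+1) := by
  induction m, hs using Nat.le_induction with
  | base => simp
  | succ m hm ih =>
    rw [Finset.sum_Ico_succ_top hm]
    have := Nat.choose_succ_succ m i
    simp only [Nat.succ_eq_add_one] at this
    omega

lemma choose_sub_eq_sum_real (m s i : ℕ) (hs : s ≤ m) :
    (m.choose (i+1) : ℝ) - s.choose (i+1) = ∑ j ∈ Finset.Ico s m, (j.choose i : ℝ) := by
  have h := choose_sub_eq_sum m s i hs
  have : ((s.choose (i+1) + ∑ j ∈ Finset.Ico s m, j.choose i : ℕ) : ℝ) = (m.choose (i+1) : ℝ) := by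
    exact_mod_cast congrArg (Nat.cast : ℕ → ℝ) h
  push_cast at this
  linarith

lemma hpoint (m k s : ℕ) (hk2 : 2 ≤ k) (hkm : k+1 ≤ m) (hs : s ≤ m) :
    2 * (((m.choose k : ℝ) - s.choose k) / ((m-1).choose (k-1))) ≤
      ((m.choose (k-1) : ℝ) - s.choose (k-1)) / ((m-1).choose (k-2)) +
      ((m.choose (k+1) : ℝ) - s.choose (k+1)) / ((m-1).choose k) := by
  obtain ⟨i, rfl⟩ : ∃ i, k = i + 2 := ⟨k - 2, by omega⟩
  obtain ⟨A, rfl⟩ : ∃ A, m = A + 1 := ⟨m - 1, by omega⟩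
  have hiA : i + 2 ≤ A := by omega
  have hs' : s ≤ A + 1 := hs
  simp only [Nat.add_sub_cancel, show i + 2 - 1 = i + 1 from rfl, show i + 2 - 2 = i from rfl]
  rw [show i + 2 = (i+1)+1 from rfl, choose_sub_eq_sum_real (A+1) s (i+1) hs']
  rw [show (i+1)+1+1 = (i+2)+1 from rfl, choose_sub_eq_sum_real (A+1) s (i+2) hs']
  rw [choose_sub_eq_sum_real (A+1) s i hs']
  rw [Finset.sum_div, Finset.sum_div, Finset.sum_div, Finset.mul_sum, ← Finset.sum_add_distrib]
  apply Finset.sum_le_sum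
  intro j hj
  have hjA : j ≤ A := by
    have := (Finset.mem_Ico.1 hj).2; omega
  exact key_real A j i hjA hiA

theorem gumbel_bound_convex
    {Ω : Type*} [MeasurableSpace Ω] (μ : Measure Ω) [IsProbabilityMeasure μ]
    (m n : ℕ) (S T : Ω → ℕ) (hS : Measurable S) (hT : Measurable T)
    (hSm : ∀ᵐ ω ∂μ, S ω ≤ m) (hTn : ∀ᵐ ω ∂μ, T ω ≤ n)
    (G : ℕ → ℕ → ℝ)
    (hG : ∀ k l, G k l =
      (∫ ω, ((m.choose k : ℝ) - ((S ω).choose k)) *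
          ((n.choose l : ℝ) - ((T ω).choose l)) ∂μ) /
        (((m - 1).choose (k - 1) : ℝ) * ((n - 1).choose (l - 1) : ℝ)))
    (k l : ℕ) (hk2 : 2 ≤ k) (hkm : k + 1 ≤ m) (hl1 : 1 ≤ l) (hln : l ≤ n) :
    G k l - G (k + 1) l ≤ G (k - 1) l - G k l := by
  set u : ℕ → Ω → ℝ := fun j ω =>
    ((m.choose j : ℝ) - ((S ω).choose j)) * ((n.choose l : ℝ) - ((T ω).choose l)) with hu
  set c1 : ℝ := ((m-1).choose (k-2) : ℝ) with hc1
  set c2 : ℝ := ((m-1).choose (k-1) : ℝ) with hc2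
  set c3 : ℝ := ((m-1).choose k : ℝ) with hc3
  set D : ℝ := ((n-1).choose (l-1) : ℝ) with hD
  have hc1p : 0 < c1 := by
    rw [hc1]; exact_mod_cast Nat.choose_pos (by omega)
  have hc2p : 0 < c2 := by
    rw [hc2]; exact_mod_cast Nat.choose_pos (by omega)
  have hc3p : 0 < c3 := by
    rw [hc3]; exact_mod_cast Nat.choose_pos (by omega)
  have hDp : 0 < D := by
    rw [hD]; exact_mod_cast Nat.choose_pos (by omega)
  -- integrability
  have hint : ∀ j : ℕ, Integrable (u j) μ := by
    intro j
    apply Integrable.mono' (integrable_const ((m.choose j : ℝ) * (n.choose l : ℝ)))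
    · apply Measurable.aestronglyMeasurable
      have m1 : Measurable fun ω => ((m.choose j : ℝ) - ((S ω).choose j)) :=
        measurable_const.sub
          ((measurable_from_top (f := fun s : ℕ => ((s.choose j : ℕ) : ℝ))).comp hS)
      have m2 : Measurable fun ω => ((n.choose l : ℝ) - ((T ω).choose l)) :=
        measurable_const.sub
          ((measurable_from_top (f := fun s : ℕ => ((s.choose l : ℕ) : ℝ))).comp hT)
      exact m1.mul m2
    · filter_upwards [hSm, hTn] with ω h1 h2
      have hS1 : ((S ω).choose j : ℝ) ≤ (m.choose j : ℝ) := by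
        exact_mod_cast Nat.choose_le_choose j h1
      have hT1 : ((T ω).choose l : ℝ) ≤ (n.choose l : ℝ) := by
        exact_mod_cast Nat.choose_le_choose l h2
      have hS0 : (0:ℝ) ≤ ((S ω).choose j : ℝ) := by positivity
      have hT0 : (0:ℝ) ≤ ((T ω).choose l : ℝ) := by positivity
      rw [hu]
      simp only [Real.norm_eq_abs]
      rw [abs_of_nonneg (by nlinarith)]
      nlinarith
  -- pointwise convexity integrated
  have h0 : 0 ≤ ∫ ω, (u (k-1) ω / c1 + u (k+1) ω / c3 - 2 * (u k ω / c2)) ∂μ := by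
    apply integral_nonneg_of_ae
    filter_upwards [hSm, hTn] with ω h1 h2
    have hg : (0:ℝ) ≤ (n.choose l : ℝ) - ((T ω).choose l) := by
      have : ((T ω).choose l : ℝ) ≤ (n.choose l : ℝ) := by
        exact_mod_cast Nat.choose_le_choose l h2
      linarith
    have hp := hpoint m k (S ω) hk2 hkm h1
    rw [← hc2, ← hc1, ← hc3] at hp
    have heq : u (k-1) ω / c1 + u (k+1) ω / c3 - 2 * (u k ω / c2)
        = (((m.choose (k-1) : ℝ) - ((S ω).choose (k-1))) / c1
          + ((m.choose (k+1) : ℝ) - ((S ω).choose (k+1))) / c3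
          - 2 * (((m.choose k : ℝ) - ((S ω).choose k)) / c2))
          * ((n.choose l : ℝ) - ((T ω).choose l)) := by
      rw [hu]; ring
    rw [heq]
    apply mul_nonneg _ hg
    linarith
  -- split the integral
  have hsplit : ∫ ω, (u (k-1) ω / c1 + u (k+1) ω / c3 - 2 * (u k ω / c2)) ∂μ
      = (∫ ω, u (k-1) ω ∂μ) / c1 + (∫ ω, u (k+1) ω ∂μ) / c3
        - 2 * ((∫ ω, u k ω ∂μ) / c2) := by
    have i1 : Integrable (fun ω => u (k-1) ω / c1) μ := (hint (k-1)).div_const c1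
    have i3 : Integrable (fun ω => u (k+1) ω / c3) μ := (hint (k+1)).div_const c3
    have i13 : Integrable (fun ω => u (k-1) ω / c1 + u (k+1) ω / c3) μ := i1.add i3
    have i2 : Integrable (fun ω => 2 * (u k ω / c2)) μ := ((hint k).div_const c2).const_mul 2
    rw [integral_sub i13 i2, integral_add i1 i3,
      MeasureTheory.integral_const_mul, integral_div, integral_div, integral_div]
  have key2 : 2 * ((∫ ω, u k ω ∂μ) / c2)
      ≤ (∫ ω, u (k-1) ω ∂μ) / c1 + (∫ ω, u (k+1) ω ∂μ) / c3 := by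
    rw [hsplit] at h0; linarith
  -- rewrite G
  have hGk : G k l = ((∫ ω, u k ω ∂μ) / c2) / D := by
    rw [hG k l, hu, hc2, hD, div_div]
  have hGk1 : G (k+1) l = ((∫ ω, u (k+1) ω ∂μ) / c3) / D := by
    rw [hG (k+1) l, hu, hc3, hD, div_div, Nat.add_sub_cancel]
  have hGkm : G (k-1) l = ((∫ ω, u (k-1) ω ∂μ) / c1) / D := by
    rw [hG (k-1) l, hu, hc1, hD, div_div, show k - 1 - 1 = k - 2 by omega]
  rw [hGk, hGk1, hGkm]
  have h4 : (2 * ((∫ ω, u k ω ∂μ) / c2)) / D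
      ≤ ((∫ ω, u (k-1) ω ∂μ) / c1 + (∫ ω, u (k+1) ω ∂μ) / c3) / D := by
    gcongr
  have e1 : (2 * ((∫ ω, u k ω ∂μ) / c2)) / D = 2 * (((∫ ω, u k ω ∂μ) / c2) / D) := by ring
  have e2 : ((∫ ω, u (k-1) ω ∂μ) / c1 + (∫ ω, u (k+1) ω ∂μ) / c3) / D
      = ((∫ ω, u (k-1) ω ∂μ) / c1) / D + ((∫ ω, u (k+1) ω ∂μ) / c3) / D := by ring
  rw [e1, e2] at h4
  linarith
end

section
/- Let (S,T) be a pair of random variables on {0,...,m} × {0,...,n} with binomial moments S_{i,j} = E[C(S,i) C(T,j)]. Then P(S ≥ 1, T ≥ 1) ≤ S_{1,1} − S_{1,2}/(n−1) − S_{2,1}/(m−1) + S_{2,2}/((m−1)(n−1)), provided m,n ≥ 2. (Bivariate Gumbel upper bound at k = l = 2) -/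
/-!
Writing `Φ_m(s) = s - C(s,2)/(m-1)`, the bound's integrand is `C(S,1)C(T,1) - … = Φ_m(S) Φ_n(T)`.
For `0 ≤ s ≤ m` one has `Φ_m(s) = s(2m-1-s)/(2(m-1)) ≥ 0`, and for `1 ≤ s ≤ m`,
`Φ_m(s) - 1 = (s-1)(2m-2-s)/(2(m-1)) ≥ 0`. Hence `Φ_m(S) Φ_n(T)` dominates the indicator of
`{S ≥ 1, T ≥ 1}` pointwise, and taking expectations gives the bound.
-/

open MeasureTheory

noncomputable def gumbelFactor (m s : ℕ) : ℝ :=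
  (s : ℝ) - (s.choose 2 : ℝ) / ((m : ℝ) - 1)

lemma gumbelFactor_nonneg {m s : ℕ} (hm : 2 ≤ m) (hs : s ≤ m) : 0 ≤ gumbelFactor m s := by
  have hm' : (2 : ℝ) ≤ m := by exact_mod_cast hm
  have hs' : (s : ℝ) ≤ m := by exact_mod_cast hs
  rw [gumbelFactor, sub_nonneg, div_le_iff₀ (by linarith), Nat.cast_choose_two]
  nlinarith [(Nat.cast_nonneg s : (0 : ℝ) ≤ s)]

lemma one_le_gumbelFactor {m s : ℕ} (hm : 2 ≤ m) (hs : s ≤ m) (hs₁ : 1 ≤ s) :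
    1 ≤ gumbelFactor m s := by
  have hm' : (2 : ℝ) ≤ m := by exact_mod_cast hm
  have hs' : (s : ℝ) ≤ m := by exact_mod_cast hs
  have hs₁' : (1 : ℝ) ≤ s := by exact_mod_cast hs₁
  have hpos : (0 : ℝ) < (m : ℝ) - 1 := by linarith
  have hdiff : gumbelFactor m s - 1 = ((s : ℝ) - 1) * (2 * m - 2 - s) / (2 * ((m : ℝ) - 1)) := by
    rw [gumbelFactor, Nat.cast_choose_two]
    field_simp
    ring
  have : 0 ≤ gumbelFactor m s - 1 := by
    rw [hdiff]
    exact div_nonneg (mul_nonneg (by linarith) (by linarith)) (by linarith)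
  linarith

lemma ite_le_gumbelFactor_mul {m n s t : ℕ} (hm : 2 ≤ m) (hn : 2 ≤ n) (hs : s ≤ m) (ht : t ≤ n) :
    (if 1 ≤ s ∧ 1 ≤ t then (1 : ℝ) else 0) ≤ gumbelFactor m s * gumbelFactor n t := by
  split_ifs with h
  · exact one_le_mul_of_one_le_of_one_le (one_le_gumbelFactor hm hs h.1)
      (one_le_gumbelFactor hn ht h.2)
  · exact mul_nonneg (gumbelFactor_nonneg hm hs) (gumbelFactor_nonneg hn ht)

lemma gumbelFactor_mul_gumbelFactor {m n : ℕ} (hm : 2 ≤ m) (hn : 2 ≤ n) (s t : ℕ) :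
    gumbelFactor m s * gumbelFactor n t =
      (s.choose 1 : ℝ) * (t.choose 1 : ℝ) -
        (s.choose 1 : ℝ) * (t.choose 2 : ℝ) / ((n : ℝ) - 1) -
        (s.choose 2 : ℝ) * (t.choose 1 : ℝ) / ((m : ℝ) - 1) +
        (s.choose 2 : ℝ) * (t.choose 2 : ℝ) / (((m : ℝ) - 1) * ((n : ℝ) - 1)) := by
  have hm' : (m : ℝ) - 1 ≠ 0 := by
    have : (2 : ℝ) ≤ m := by exact_mod_cast hm
    linarith
  have hn' : (n : ℝ) - 1 ≠ 0 := by
    have : (2 : ℝ) ≤ n := by exact_mod_cast hn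
    linarith
  simp only [gumbelFactor, Nat.choose_one_right]
  field_simp
  ring

lemma integrable_comp_of_ae_le {Ω : Type*} [MeasurableSpace Ω] {μ : Measure Ω} [IsFiniteMeasure μ]
    {m n : ℕ} {S T : Ω → ℕ} (hS : Measurable S) (hT : Measurable T)
    (hSm : ∀ᵐ ω ∂μ, S ω ≤ m) (hTn : ∀ᵐ ω ∂μ, T ω ≤ n) (g : ℕ → ℕ → ℝ) :
    Integrable (fun ω => g (S ω) (T ω)) μ := by
  refine Integrable.of_bound
    ((measurable_of_countable (Function.uncurry g)).comp (hS.prodMk hT)).aestronglyMeasurable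
    (∑ i ∈ Finset.range (m + 1), ∑ j ∈ Finset.range (n + 1), |g i j|) ?_
  filter_upwards [hSm, hTn] with ω hs ht
  calc ‖g (S ω) (T ω)‖ = |g (S ω) (T ω)| := Real.norm_eq_abs _
    _ ≤ ∑ j ∈ Finset.range (n + 1), |g (S ω) j| :=
      Finset.single_le_sum (f := fun j => |g (S ω) j|) (fun _ _ => abs_nonneg _)
        (Finset.mem_range_succ_iff.2 ht)
    _ ≤ ∑ i ∈ Finset.range (m + 1), ∑ j ∈ Finset.range (n + 1), |g i j| :=
      Finset.single_le_sum (f := fun i => ∑ j ∈ Finset.range (n + 1), |g i j|)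
        (fun _ _ => Finset.sum_nonneg fun _ _ => abs_nonneg _) (Finset.mem_range_succ_iff.2 hs)

theorem bivariate_gumbel_bound_k2_l2
    {Ω : Type*} [MeasurableSpace Ω] (μ : Measure Ω) [IsProbabilityMeasure μ]
    (m n : ℕ) (S T : Ω → ℕ) (hS : Measurable S) (hT : Measurable T)
    (hSm : ∀ᵐ ω ∂μ, S ω ≤ m) (hTn : ∀ᵐ ω ∂μ, T ω ≤ n)
    (hm : 2 ≤ m) (hn : 2 ≤ n) :
    (μ {ω | 1 ≤ S ω ∧ 1 ≤ T ω}).toReal ≤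
      (∫ ω, (((S ω).choose 1 : ℝ) * ((T ω).choose 1 : ℝ)) ∂μ) -
        (∫ ω, (((S ω).choose 1 : ℝ) * ((T ω).choose 2 : ℝ)) ∂μ) / ((n : ℝ) - 1) -
        (∫ ω, (((S ω).choose 2 : ℝ) * ((T ω).choose 1 : ℝ)) ∂μ) / ((m : ℝ) - 1) +
        (∫ ω, (((S ω).choose 2 : ℝ) * ((T ω).choose 2 : ℝ)) ∂μ) /
          (((m : ℝ) - 1) * ((n : ℝ) - 1)) := by
  have hint (i j : ℕ) : Integrable (fun ω => ((S ω).choose i : ℝ) * ((T ω).choose j : ℝ)) μ :=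
    integrable_comp_of_ae_le hS hT hSm hTn fun s t => (s.choose i : ℝ) * (t.choose j : ℝ)
  have hA : MeasurableSet {ω | 1 ≤ S ω ∧ 1 ≤ T ω} :=
    (hS measurableSet_Ici).inter (hT measurableSet_Ici)
  calc (μ {ω | 1 ≤ S ω ∧ 1 ≤ T ω}).toReal
      = ∫ ω, (if 1 ≤ S ω ∧ 1 ≤ T ω then (1 : ℝ) else 0) ∂μ := by
        rw [← measureReal_def, ← integral_indicator_one hA]
        simp only [Set.indicator_apply, Set.mem_ofPred_eq, Pi.one_apply]
    _ ≤ ∫ ω, gumbelFactor m (S ω) * gumbelFactor n (T ω) ∂μ := by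
        refine integral_mono_ae
          (integrable_comp_of_ae_le hS hT hSm hTn fun s t => if 1 ≤ s ∧ 1 ≤ t then 1 else 0)
          (integrable_comp_of_ae_le hS hT hSm hTn fun s t => gumbelFactor m s * gumbelFactor n t) ?_
        filter_upwards [hSm, hTn] with ω hs ht
        exact ite_le_gumbelFactor_mul hm hn hs ht
    _ = _ := by
        simp_rw [gumbelFactor_mul_gumbelFactor hm hn]
        rw [integral_add, integral_sub, integral_sub, integral_div, integral_div, integral_div]
        · exact hint 1 1
        · exact (hint 1 2).div_const _
        · exact (hint 1 1).sub ((hint 1 2).div_const _)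
        · exact (hint 2 1).div_const _
        · exact ((hint 1 1).sub ((hint 1 2).div_const _)).sub ((hint 2 1).div_const _)
        · exact (hint 2 2).div_const _
end
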